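/- For every LTL formula Φ in the syntactic class TL_Prefix, there exists a deterministic ω-automaton A over the alphabet 2^V with a prefix acceptance condition (given by finitely many pairs of state sets (F_j, E_j) for j = 0,…,f, a run β is accepting iff for every j, either β stays in F_j at all times or β visits E_j at least once) such that A has at most 2^(2^|Φ|) states and A accepts exactly the set of infinite words w with w ⊨ Φ. -/

import Mathlib

/-- LTL formulas over atomic propositions `V`: the constant `true`, variables,
negation, disjunction, next (`X`), and strong until (`SU`). -/
inductive LTL (V : Type) : Type
  | tt : LTL V
  | var : V → LTL V
  | lnot : LTL V → LTL V
  | lor : LTL V → LTL V → LTL V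
  | lnext : LTL V → LTL V
  | lsu : LTL V → LTL V → LTL V

namespace LTL

variable {V : Type}

/-- Semantics: `Sat w φ i` means `w, i ⊨ φ` for an infinite word `w : ℕ → Set V`.
In particular `w, i ⊨ ψ SU φ` iff there is `k ≥ i` with `w, k ⊨ ψ` and
`w, j ⊨ φ` for all `i ≤ j < k`. -/
def Sat (w : ℕ → Set V) : LTL V → ℕ → Prop
  | tt, _ => True
  | var v, i => v ∈ w i
  | lnot φ, i => ¬ Sat w φ i
  | lor φ ψ, i => Sat w φ i ∨ Sat w ψ i
  | lnext φ, i => Sat w φ (i + 1)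
  | lsu ψ φ, i => ∃ k, i ≤ k ∧ Sat w ψ k ∧ ∀ j, i ≤ j → j < k → Sat w φ j

/-- Conjunction, as the abbreviation `¬(¬φ ∨ ¬ψ)`. -/
def land (φ ψ : LTL V) : LTL V := lnot (lor (lnot φ) (lnot ψ))

/-- `F φ := φ SU true`. -/
def lF (φ : LTL V) : LTL V := lsu φ tt

/-- `G φ := ¬ F ¬ φ`. -/
def lG (φ : LTL V) : LTL V := lnot (lF (lnot φ))

/-- Weak until: `ψ U φ := (ψ SU φ) ∨ G φ`. -/
def lwu (ψ φ : LTL V) : LTL V := lor (lsu ψ φ) (lG φ)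

/-- Number of nodes of the syntax tree. -/
def size : LTL V → ℕ
  | tt => 1
  | var _ => 1
  | lnot φ => size φ + 1
  | lor φ ψ => size φ + size ψ + 1
  | lnext φ => size φ + 1
  | lsu ψ φ => size ψ + size φ + 1

mutual
  /-- The syntactic class `TL_G`. -/
  inductive TLG : LTL V → Prop
    | var (v : V) : TLG (LTL.var v)
    | not {φ : LTL V} : TLF φ → TLG (LTL.lnot φ)
    | and {φ ψ : LTL V} : TLG φ → TLG ψ → TLG (LTL.land φ ψ)
    | or {φ ψ : LTL V} : TLG φ → TLG ψ → TLG (LTL.lor φ ψ)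
    | next {φ : LTL V} : TLG φ → TLG (LTL.lnext φ)
    | alw {φ : LTL V} : TLG φ → TLG (LTL.lG φ)
    | wu {ψ φ : LTL V} : TLG ψ → TLG φ → TLG (LTL.lwu ψ φ)
  /-- The syntactic class `TL_F`. -/
  inductive TLF : LTL V → Prop
    | var (v : V) : TLF (LTL.var v)
    | not {φ : LTL V} : TLG φ → TLF (LTL.lnot φ)
    | and {φ ψ : LTL V} : TLF φ → TLF ψ → TLF (LTL.land φ ψ)
    | or {φ ψ : LTL V} : TLF φ → TLF ψ → TLF (LTL.lor φ ψ)
    | next {φ : LTL V} : TLF φ → TLF (LTL.lnext φ)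
    | ev {φ : LTL V} : TLF φ → TLF (LTL.lF φ)
    | su {ψ φ : LTL V} : TLF ψ → TLF φ → TLF (LTL.lsu ψ φ)
end

end LTL

/-- The unique run of a deterministic automaton with transition function `δ`
and initial state `s0` on the infinite word `w`. -/
def detRun {S A : Type} (δ : S → A → S) (s0 : S) (w : ℕ → A) : ℕ → S
  | 0 => s0
  | t + 1 => δ (detRun δ s0 w t) (w t)

namespace LTL

variable {V : Type}

/-- The syntactic class `TL_Prefix`: the closure of `TL_G ∪ TL_F` under `¬, ∧, ∨`. -/
inductive TLPrefix : LTL V → Prop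
  | g {φ : LTL V} : TLG φ → TLPrefix φ
  | f {φ : LTL V} : TLF φ → TLPrefix φ
  | not {φ : LTL V} : TLPrefix φ → TLPrefix (LTL.lnot φ)
  | and {φ ψ : LTL V} : TLPrefix φ → TLPrefix ψ → TLPrefix (LTL.land φ ψ)
  | or {φ ψ : LTL V} : TLPrefix φ → TLPrefix ψ → TLPrefix (LTL.lor φ ψ)

end LTL

/-!
The automaton reads `Φ` through a truncated semantics: after a prefix of length `t`, every formula
at a position `≥ t` is given an arbitrary truth value by a horizon assignment `a`. The state after
`t` letters is the set of assignments, restricted to the subformulas of `Φ`, under which `Φ` holds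
at `0`; it is updated letter by letter through the expansion laws of `X` and `SU`, so there are at
most `2 ^ 2 ^ |Φ|` states.

If a `TL_F` formula holds, all sufficiently long prefixes make it true under every assignment; if a
`TL_G` formula fails, all sufficiently long prefixes make it false under every assignment. This is a
mutual induction on `TL_G` / `TL_F`, in which each step involves only finitely many positions.
Hence a `TL_G` formula holds iff the state is never empty, and a `TL_F` formula iff the state
eventually contains every assignment: one pair `(F, E)` each. Because leaving `F_j` and entering
`E_j` are irreversible, such automata are closed under complement and product, which handles the
Boolean combinations in `TL_Prefix`.
-/

open Filter

namespace LTL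

variable {V : Type}

theorem sat_lG {w : ℕ → Set V} {φ : LTL V} {i : ℕ} :
    Sat w (lG φ) i ↔ ∀ k, i ≤ k → Sat w φ k := by
  simp [lG, lF, Sat]

theorem sat_lsu_iff {w : ℕ → Set V} {ψ φ : LTL V} {i : ℕ} :
    Sat w (lsu ψ φ) i ↔ Sat w ψ i ∨ (Sat w φ i ∧ Sat w (lsu ψ φ) (i + 1)) := by
  constructor
  · rintro ⟨k, hik, hψ, hφ⟩
    rcases hik.eq_or_lt with rfl | hik
    · exact Or.inl hψ
    · exact Or.inr ⟨hφ i le_rfl hik, k, hik, hψ, fun j hij hjk => hφ j (by omega) hjk⟩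
  · rintro (hψ | ⟨hφ, k, hik, hψ, hφ'⟩)
    · exact ⟨i, le_rfl, hψ, fun j hij hji => absurd hji (not_lt.2 hij)⟩
    · refine ⟨k, by omega, hψ, fun j hij hjk => ?_⟩
      rcases hij.eq_or_lt with rfl | hij
      exacts [hφ, hφ' j hij hjk]

def sub : LTL V → List (LTL V)
  | tt => [tt]
  | var v => [var v]
  | lnot φ => lnot φ :: sub φ
  | lor φ ψ => lor φ ψ :: (sub φ ++ sub ψ)
  | lnext φ => lnext φ :: sub φ
  | lsu ψ φ => lsu ψ φ :: (sub ψ ++ sub φ)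

theorem mem_sub_self (φ : LTL V) : φ ∈ sub φ := by
  cases φ <;> simp [sub]

theorem length_sub (φ : LTL V) : (sub φ).length = size φ := by
  induction φ <;> simp [sub, size, *]

theorem sub_subset_sub {φ ψ : LTL V} (h : ψ ∈ sub φ) : sub ψ ⊆ sub φ := by
  induction φ with
  | tt | var _ => simp_all [sub]
  | lnot _ ih | lnext _ ih =>
    simp only [sub, List.mem_cons] at h ⊢
    rcases h with rfl | h
    · exact List.Subset.refl _
    · exact List.Subset.trans (ih h) (List.subset_cons_self _ _)
  | lor _ _ ih₁ ih₂ | lsu _ _ ih₁ ih₂ =>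
    simp only [sub, List.mem_cons, List.mem_append] at h ⊢
    rcases h with rfl | h | h
    · exact List.Subset.refl _
    · exact List.Subset.trans (ih₁ h)
        (List.subset_cons_of_subset _ (List.subset_append_left _ _))
    · exact List.Subset.trans (ih₂ h)
        (List.subset_cons_of_subset _ (List.subset_append_right _ _))

/-- Satisfaction read on the prefix `w 0, …, w (t - 1)` only: a formula evaluated at any position
`≥ t` takes the value `a` assigns to it. -/
def TruncSat (w : ℕ → Set V) (t : ℕ) (a : LTL V → Prop) : LTL V → ℕ → Prop
  | tt, i => if t ≤ i then a tt else True
  | var v, i => if t ≤ i then a (var v) else v ∈ w i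
  | lnot φ, i => if t ≤ i then a (lnot φ) else ¬ TruncSat w t a φ i
  | lor φ ψ, i => if t ≤ i then a (lor φ ψ) else TruncSat w t a φ i ∨ TruncSat w t a ψ i
  | lnext φ, i => if t ≤ i then a (lnext φ) else TruncSat w t a φ (i + 1)
  | lsu ψ φ, i => if t ≤ i then a (lsu ψ φ) else
      (∃ k, i ≤ k ∧ k < t ∧ TruncSat w t a ψ k ∧ ∀ j, i ≤ j → j < k → TruncSat w t a φ j) ∨
      ((∀ j, i ≤ j → j < t → TruncSat w t a φ j) ∧ a (lsu ψ φ))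

/-- The truth values at a position carrying the letter `σ`, given the values `a` at the next
position (the expansion laws of `X` and `SU`). -/
def step (σ : Set V) (a : LTL V → Prop) : LTL V → Prop
  | tt => True
  | var v => v ∈ σ
  | lnot φ => ¬ step σ a φ
  | lor φ ψ => step σ a φ ∨ step σ a ψ
  | lnext φ => a φ
  | lsu ψ φ => step σ a ψ ∨ (step σ a φ ∧ a (lsu ψ φ))

section TruncSat

variable {w : ℕ → Set V} {t i : ℕ} {a : LTL V → Prop}

theorem truncSat_of_le (h : t ≤ i) (φ : LTL V) : TruncSat w t a φ i ↔ a φ := by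
  cases φ <;> simp [TruncSat, h]

theorem truncSat_tt (h : i < t) : TruncSat w t a tt i := by
  simp [TruncSat, not_le.2 h]

theorem truncSat_lnot (h : i < t) (φ : LTL V) :
    TruncSat w t a (lnot φ) i ↔ ¬ TruncSat w t a φ i := by
  simp [TruncSat, not_le.2 h]

theorem truncSat_lor (h : i < t) (φ ψ : LTL V) :
    TruncSat w t a (lor φ ψ) i ↔ TruncSat w t a φ i ∨ TruncSat w t a ψ i := by
  simp [TruncSat, not_le.2 h]

theorem truncSat_var (h : i < t) (v : V) : TruncSat w t a (var v) i ↔ v ∈ w i := by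
  simp [TruncSat, not_le.2 h]

theorem truncSat_lnext (h : i < t) (φ : LTL V) :
    TruncSat w t a (lnext φ) i ↔ TruncSat w t a φ (i + 1) := by
  simp [TruncSat, not_le.2 h]

theorem truncSat_lsu (h : i < t) (ψ φ : LTL V) :
    TruncSat w t a (lsu ψ φ) i ↔
      (∃ k, i ≤ k ∧ k < t ∧ TruncSat w t a ψ k ∧ ∀ j, i ≤ j → j < k → TruncSat w t a φ j) ∨
      ((∀ j, i ≤ j → j < t → TruncSat w t a φ j) ∧ a (lsu ψ φ)) := by
  rw [TruncSat, if_neg (not_le.2 h)]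

theorem truncSat_succ_self (φ : LTL V) : TruncSat w (t + 1) a φ t ↔ step (w t) a φ := by
  have ht : t < t + 1 := t.lt_succ_self
  induction φ with
  | tt => simp [truncSat_tt ht, step]
  | var v => simp [TruncSat, step]
  | lnot φ ih => exact (truncSat_lnot ht φ).trans (not_congr ih)
  | lor φ ψ ih₁ ih₂ => exact (truncSat_lor ht φ ψ).trans (or_congr ih₁ ih₂)
  | lnext φ => simp [TruncSat, step, truncSat_of_le]
  | lsu ψ φ ih₁ ih₂ =>
    rw [truncSat_lsu ht, step]
    constructor
    · rintro (⟨k, hk, hkt, hψ, -⟩ | ⟨hφ, ha⟩)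
      · obtain rfl : k = t := by omega
        exact Or.inl (ih₁.1 hψ)
      · exact Or.inr ⟨ih₂.1 (hφ t le_rfl ht), ha⟩
    · rintro (hψ | ⟨hφ, ha⟩)
      · exact Or.inl ⟨t, le_rfl, ht, ih₁.2 hψ, fun j _ _ => by omega⟩
      · exact Or.inr ⟨fun j _ _ => by rw [show j = t by omega]; exact ih₂.2 hφ, ha⟩

theorem truncSat_succ (φ : LTL V) (hi : i ≤ t) :
    TruncSat w (t + 1) a φ i ↔ TruncSat w t (step (w t) a) φ i := by
  induction φ generalizing i <;> obtain rfl | hit := hi.eq_or_lt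
  -- At `i = t` both sides are `step (w t) a φ`.
  all_goals first
    | exact (truncSat_succ_self _).trans (truncSat_of_le le_rfl _).symm
    | have hit' : i < t + 1 := by omega
  case tt => simp [truncSat_tt hit, truncSat_tt hit']
  case var v => simp [TruncSat, not_le.2 hit, not_le.2 hit']
  case lnot φ ih =>
    exact (truncSat_lnot hit' φ).trans ((not_congr (ih hi)).trans (truncSat_lnot hit φ).symm)
  case lor φ ψ ih₁ ih₂ =>
    exact (truncSat_lor hit' φ ψ).trans
      ((or_congr (ih₁ hi) (ih₂ hi)).trans (truncSat_lor hit φ ψ).symm)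
  case lnext φ ih =>
    exact (truncSat_lnext hit' φ).trans ((ih hit).trans (truncSat_lnext hit φ).symm)
  case lsu ψ φ ih₁ ih₂ =>
    have hψt := truncSat_succ_self (w := w) (t := t) (a := a) ψ
    have hφt := truncSat_succ_self (w := w) (t := t) (a := a) φ
    rw [truncSat_lsu hit', truncSat_lsu hit, step]
    constructor
    · rintro (⟨k, hik, hkt, hψ, hφ⟩ | ⟨hφ, ha⟩)
      · rcases (Nat.lt_succ_iff.1 hkt).lt_or_eq with hkt | rfl
        · exact Or.inl ⟨k, hik, hkt, (ih₁ hkt.le).1 hψ,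
            fun j hij hjk => (ih₂ (by omega)).1 (hφ j hij hjk)⟩
        · exact Or.inr ⟨fun j hij hjk => (ih₂ hjk.le).1 (hφ j hij hjk), Or.inl (hψt.1 hψ)⟩
      · exact Or.inr ⟨fun j hij hjt => (ih₂ hjt.le).1 (hφ j hij (by omega)),
          Or.inr ⟨hφt.1 (hφ t hit.le t.lt_succ_self), ha⟩⟩
    · rintro (⟨k, hik, hkt, hψ, hφ⟩ | ⟨hφ, hψ | ⟨hφ', ha⟩⟩)
      · exact Or.inl ⟨k, hik, by omega, (ih₁ hkt.le).2 hψ,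
          fun j hij hjk => (ih₂ (by omega)).2 (hφ j hij hjk)⟩
      · exact Or.inl ⟨t, hit.le, t.lt_succ_self, hψt.2 hψ,
          fun j hij hjt => (ih₂ hjt.le).2 (hφ j hij hjt)⟩
      · refine Or.inr ⟨fun j hij hjt => ?_, ha⟩
        rcases (Nat.lt_succ_iff.1 hjt).lt_or_eq with hjt | rfl
        · exact (ih₂ hjt.le).2 (hφ j hij hjt)
        · exact hφt.2 hφ'

theorem step_sat (φ : LTL V) : step (w t) (fun χ => Sat w χ (t + 1)) φ ↔ Sat w φ t := by
  induction φ with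
  | tt | var _ | lnext _ => exact Iff.rfl
  | lnot φ ih => exact not_congr ih
  | lor φ ψ ih₁ ih₂ => exact or_congr ih₁ ih₂
  | lsu ψ φ ih₁ ih₂ => exact (or_congr ih₁ (and_congr_left' ih₂)).trans sat_lsu_iff.symm

theorem truncSat_sat (φ : LTL V) (hi : i ≤ t) :
    TruncSat w t (fun χ => Sat w χ t) φ i ↔ Sat w φ i := by
  induction t, hi using Nat.le_induction with
  | base => exact truncSat_of_le le_rfl φ
  | succ t hit ih =>
    have hstep : step (w t) (fun χ => Sat w χ (t + 1)) = fun χ => Sat w χ t :=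
      funext fun χ => propext (step_sat χ)
    rw [truncSat_succ φ hit, hstep]
    exact ih

end TruncSat

def PrefixVerified (w : ℕ → Set V) (φ : LTL V) : Prop :=
  ∀ i, ∀ᶠ t in atTop, Sat w φ i → ∀ a, TruncSat w t a φ i

def PrefixRefuted (w : ℕ → Set V) (φ : LTL V) : Prop :=
  ∀ i, ∀ᶠ t in atTop, ¬ Sat w φ i → ∀ a, ¬ TruncSat w t a φ i

section Prefix

variable {w : ℕ → Set V} {φ ψ : LTL V}

theorem prefixVerified_tt : PrefixVerified w tt :=
  fun i => (eventually_gt_atTop i).mono fun _ hit _ _ => truncSat_tt hit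

theorem prefixVerified_var (v : V) : PrefixVerified w (var v) :=
  fun i => (eventually_gt_atTop i).mono fun _ hit hv _ => (truncSat_var hit v).2 hv

theorem prefixRefuted_var (v : V) : PrefixRefuted w (var v) :=
  fun i => (eventually_gt_atTop i).mono fun _ hit hv _ => mt (truncSat_var hit v).1 hv

theorem prefixVerified_lnot : PrefixVerified w (lnot φ) ↔ PrefixRefuted w φ :=
  forall_congr' fun i => eventually_congr <| (eventually_gt_atTop i).mono fun t hit => by
    simp only [Sat, truncSat_lnot hit]

theorem prefixRefuted_lnot : PrefixRefuted w (lnot φ) ↔ PrefixVerified w φ :=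
  forall_congr' fun i => eventually_congr <| (eventually_gt_atTop i).mono fun t hit => by
    simp only [Sat, truncSat_lnot hit, not_not]

theorem PrefixVerified.lor (hφ : PrefixVerified w φ) (hψ : PrefixVerified w ψ) :
    PrefixVerified w (lor φ ψ) := fun i => by
  filter_upwards [hφ i, hψ i, eventually_gt_atTop i] with t hφt hψt hit
  exact fun h a => (truncSat_lor hit φ ψ).2 (h.imp (hφt · a) (hψt · a))

theorem PrefixRefuted.lor (hφ : PrefixRefuted w φ) (hψ : PrefixRefuted w ψ) :
    PrefixRefuted w (lor φ ψ) := fun i => by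
  filter_upwards [hφ i, hψ i, eventually_gt_atTop i] with t hφt hψt hit
  intro h a
  rw [truncSat_lor hit, not_or]
  exact ⟨hφt (fun h' => h (Or.inl h')) a, hψt (fun h' => h (Or.inr h')) a⟩

theorem PrefixVerified.land (hφ : PrefixVerified w φ) (hψ : PrefixVerified w ψ) :
    PrefixVerified w (land φ ψ) :=
  prefixVerified_lnot.2 ((prefixRefuted_lnot.2 hφ).lor (prefixRefuted_lnot.2 hψ))

theorem PrefixRefuted.land (hφ : PrefixRefuted w φ) (hψ : PrefixRefuted w ψ) :
    PrefixRefuted w (land φ ψ) :=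
  prefixRefuted_lnot.2 ((prefixVerified_lnot.2 hφ).lor (prefixVerified_lnot.2 hψ))

theorem PrefixVerified.lnext (hφ : PrefixVerified w φ) : PrefixVerified w (lnext φ) := fun i => by
  filter_upwards [hφ (i + 1), eventually_gt_atTop i] with t hφt hit
  exact fun h a => (truncSat_lnext hit φ).2 (hφt h a)

theorem PrefixRefuted.lnext (hφ : PrefixRefuted w φ) : PrefixRefuted w (lnext φ) := fun i => by
  filter_upwards [hφ (i + 1), eventually_gt_atTop i] with t hφt hit
  exact fun h a => mt (truncSat_lnext hit φ).1 (hφt h a)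

theorem PrefixVerified.lsu (hψ : PrefixVerified w ψ) (hφ : PrefixVerified w φ) :
    PrefixVerified w (lsu ψ φ) := fun i => by
  refine eventually_imp_distrib_left.2 fun ⟨k, hik, hψk, hφk⟩ => ?_
  have hφ' : ∀ᶠ t in atTop, ∀ j ∈ Set.Ico i k, ∀ a, TruncSat w t a φ j :=
    (Set.finite_Ico i k).eventually_all.2 fun j hj =>
      eventually_imp_distrib_left.1 (hφ j) (hφk j hj.1 hj.2)
  filter_upwards [eventually_imp_distrib_left.1 (hψ k) hψk, hφ', eventually_gt_atTop k]
    with t hψt hφt hkt a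
  exact (truncSat_lsu (hik.trans_lt hkt) ψ φ).2
    (Or.inl ⟨k, hik, hkt, hψt a, fun j hij hjk => hφt j ⟨hij, hjk⟩ a⟩)

theorem PrefixVerified.lF (hφ : PrefixVerified w φ) : PrefixVerified w (lF φ) :=
  hφ.lsu prefixVerified_tt

theorem PrefixRefuted.lG (hφ : PrefixRefuted w φ) : PrefixRefuted w (lG φ) :=
  prefixRefuted_lnot.2 (prefixVerified_lnot.2 hφ).lF

theorem PrefixRefuted.lwu (hψ : PrefixRefuted w ψ) (hφ : PrefixRefuted w φ) :
    PrefixRefuted w (lwu ψ φ) := fun i => by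
  rw [eventually_imp_distrib_left]
  simp only [LTL.lwu, Sat, sat_lG, not_or, not_forall]
  rintro ⟨hsu, k₀, hik₀, hφk₀⟩
  -- Any position `k₀` where `φ` fails will do: up to `k₀`, the prefix decides `ψ` and `φ`.
  have hψ' : ∀ᶠ t in atTop, ∀ j ∈ Set.Iic k₀, ¬ Sat w ψ j → ∀ a, ¬ TruncSat w t a ψ j :=
    (Set.finite_Iic k₀).eventually_all.2 fun j _ => hψ j
  have hφ' : ∀ᶠ t in atTop, ∀ j ∈ Set.Iic k₀, ¬ Sat w φ j → ∀ a, ¬ TruncSat w t a φ j :=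
    (Set.finite_Iic k₀).eventually_all.2 fun j _ => hφ j
  filter_upwards [hψ', hφ', eventually_gt_atTop k₀] with t hψt hφt hk₀t a
  have hit : i < t := hik₀.trans_lt hk₀t
  have hφk₀' : ¬ TruncSat w t a φ k₀ := hφt k₀ (Set.mem_Iic.2 le_rfl) hφk₀ a
  rw [truncSat_lor hit, not_or]
  constructor
  · rw [truncSat_lsu hit]
    rintro (⟨k, hik, -, hψk, hφk⟩ | ⟨hφj, -⟩)
    · rcases le_or_gt k k₀ with hkk₀ | hk₀k
      · refine hsu ⟨k, hik, ?_, fun j hij hjk => ?_⟩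
        · exact by_contra fun hn => hψt k hkk₀ hn a hψk
        · exact by_contra fun hn => hφt j (by simp; omega) hn a (hφk j hij hjk)
      · exact hφk₀' (hφk k₀ hik₀ hk₀k)
    · exact hφk₀' (hφj k₀ hik₀ hk₀t)
  · rw [LTL.lG, LTL.lF, truncSat_lnot hit, truncSat_lsu hit, not_not]
    exact Or.inl ⟨k₀, hik₀, hk₀t, (truncSat_lnot hk₀t φ).2 hφk₀',
      fun j _ hjk => truncSat_tt (by omega)⟩

end Prefix

mutual

theorem TLG.prefixRefuted {φ : LTL V} {w : ℕ → Set V} : TLG φ → PrefixRefuted w φ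
  | .var v => prefixRefuted_var v
  | .not h => prefixRefuted_lnot.2 h.prefixVerified
  | .and h₁ h₂ => h₁.prefixRefuted.land h₂.prefixRefuted
  | .or h₁ h₂ => h₁.prefixRefuted.lor h₂.prefixRefuted
  | .next h => h.prefixRefuted.lnext
  | .alw h => h.prefixRefuted.lG
  | .wu h₁ h₂ => h₁.prefixRefuted.lwu h₂.prefixRefuted

theorem TLF.prefixVerified {φ : LTL V} {w : ℕ → Set V} : TLF φ → PrefixVerified w φ
  | .var v => prefixVerified_var v
  | .not h => prefixVerified_lnot.2 h.prefixRefuted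
  | .and h₁ h₂ => h₁.prefixVerified.land h₂.prefixVerified
  | .or h₁ h₂ => h₁.prefixVerified.lor h₂.prefixVerified
  | .next h => h.prefixVerified.lnext
  | .ev h => h.prefixVerified.lF
  | .su h₁ h₂ => h₁.prefixVerified.lsu h₂.prefixVerified

end

end LTL

theorem forall_exists_iff_exists_forall_of_antitone {ι : Type*} [Finite ι] {p : ι → ℕ → Prop}
    (hp : ∀ i, Antitone (p i)) : (∀ t, ∃ i, p i t) ↔ ∃ i, ∀ t, p i t := by
  refine ⟨fun h => by_contra fun hn => ?_, fun ⟨i, hi⟩ t => ⟨i, hi t⟩⟩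
  push Not at hn
  have hev : ∀ᶠ t in atTop, ∀ i, ¬ p i t := eventually_all.2 fun i =>
    let ⟨t, ht⟩ := hn i
    eventually_atTop.2 ⟨t, fun _ hts hp' => ht (hp i hts hp')⟩
  obtain ⟨t, ht⟩ := hev.exists
  obtain ⟨i, hi⟩ := h t
  exact ht i hi

theorem forall_set_exists_notMem_or_exists_mem_iff {ι : Type*} {P Q : ι → Prop} :
    (∀ s : Set ι, (∃ i ∉ s, P i) ∨ ∃ i ∈ s, Q i) ↔ ∃ i, P i ∧ Q i := by
  refine ⟨fun h => by_contra fun hn => ?_, fun ⟨i, hP, hQ⟩ s => ?_⟩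
  · push Not at hn
    rcases h {i | P i} with ⟨i, hi, hP⟩ | ⟨i, hi, hQ⟩
    exacts [hi hP, hn i hi hQ]
  · by_cases hi : i ∈ s
    exacts [Or.inr ⟨i, hi, hQ⟩, Or.inl ⟨i, hi, hP⟩]

/-- `safe j` and `goal j` are the paper's `F_j` and `E_j`. -/
structure PrefixAutomaton (V : Type) where
  State : Type
  [fintypeState : Fintype State]
  init : State
  next : State → Set V → State
  Pair : Type
  [fintypePair : Fintype Pair]
  safe : Pair → Set State
  goal : Pair → Set State
  -- Leaving `safe j` and entering `goal j` are irreversible; this is what lets the class be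
  -- closed under complement.
  next_notMem_safe : ∀ j s σ, s ∉ safe j → next s σ ∉ safe j
  next_mem_goal : ∀ j s σ, s ∈ goal j → next s σ ∈ goal j

attribute [instance] PrefixAutomaton.fintypeState PrefixAutomaton.fintypePair

namespace PrefixAutomaton

variable {V : Type} (A B : PrefixAutomaton V)

def run (w : ℕ → Set V) : ℕ → A.State := detRun A.next A.init w

def Accepts (w : ℕ → Set V) : Prop :=
  ∀ j, (∀ t, A.run w t ∈ A.safe j) ∨ ∃ t, A.run w t ∈ A.goal j

theorem monotone_run_mem_goal (w : ℕ → Set V) (j : A.Pair) :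
    Monotone fun t => A.run w t ∈ A.goal j :=
  monotone_nat_of_le_succ fun t h => A.next_mem_goal j _ (w t) h

/-- `¬ ∀ j, (□ F_j ∨ ◇ E_j)` is `∃ j, (◇ ¬F_j ∧ □ ¬E_j)`; distributing, it becomes one pair per
set `s` of indices, and irreversibility merges the `□`s (resp. `◇`s) over `j ∉ s` (resp. `j ∈ s`)
into a single one. -/
noncomputable def compl : PrefixAutomaton V where
  State := A.State
  init := A.init
  next := A.next
  Pair := Set A.Pair
  fintypePair := by classical exact inferInstance
  safe s := {x | ∃ j ∉ s, x ∉ A.goal j}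
  goal s := {x | ∃ j ∈ s, x ∉ A.safe j}
  next_notMem_safe _ _ σ h := by
    simp only [Set.mem_ofPred_eq, not_exists, not_and, not_not] at h ⊢
    exact fun j hj => A.next_mem_goal j _ σ (h j hj)
  next_mem_goal _ _ σ := fun ⟨j, hj, hx⟩ => ⟨j, hj, A.next_notMem_safe j _ σ hx⟩

theorem accepts_compl (w : ℕ → Set V) : A.compl.Accepts w ↔ ¬ A.Accepts w := by
  have hsafe (s : Set A.Pair) : (∀ t, ∃ j ∉ s, A.run w t ∉ A.goal j) ↔
      ∃ j ∉ s, ∀ t, A.run w t ∉ A.goal j := by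
    simpa only [forall_and, forall_const] using forall_exists_iff_exists_forall_of_antitone
      (p := fun j t => j ∉ s ∧ A.run w t ∉ A.goal j)
      fun j _ _ hts h => ⟨h.1, fun h' => h.2 (A.monotone_run_mem_goal w j hts h')⟩
  change (∀ s : Set A.Pair, (∀ t, ∃ j ∉ s, A.run w t ∉ A.goal j) ∨
    ∃ t, ∃ j ∈ s, A.run w t ∉ A.safe j) ↔ _
  simp only [hsafe, exists_comm (α := ℕ), exists_and_left]
  rw [forall_set_exists_notMem_or_exists_mem_iff]
  simp only [Accepts, not_forall, not_or, not_exists, and_comm]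

def inter : PrefixAutomaton V where
  State := A.State × B.State
  init := (A.init, B.init)
  next x σ := (A.next x.1 σ, B.next x.2 σ)
  Pair := A.Pair ⊕ B.Pair
  safe := Sum.elim (fun j => Prod.fst ⁻¹' A.safe j) (fun j => Prod.snd ⁻¹' B.safe j)
  goal := Sum.elim (fun j => Prod.fst ⁻¹' A.goal j) (fun j => Prod.snd ⁻¹' B.goal j)
  next_notMem_safe
    | .inl j, x, σ => A.next_notMem_safe j x.1 σ
    | .inr j, x, σ => B.next_notMem_safe j x.2 σ
  next_mem_goal
    | .inl j, x, σ => A.next_mem_goal j x.1 σ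
    | .inr j, x, σ => B.next_mem_goal j x.2 σ

theorem run_inter (w : ℕ → Set V) (t : ℕ) : (A.inter B).run w t = (A.run w t, B.run w t) := by
  induction t with
  | zero => rfl
  | succ t ih =>
    change (A.inter B).next ((A.inter B).run w t) (w t) = _
    rw [ih]
    rfl

theorem accepts_inter (w : ℕ → Set V) :
    (A.inter B).Accepts w ↔ A.Accepts w ∧ B.Accepts w := by
  simp only [Accepts, run_inter]
  exact Sum.forall

theorem card_inter : Fintype.card (A.inter B).State = Fintype.card A.State * Fintype.card B.State :=
  Fintype.card_prod _ _

/-- The extra pair `(univ, ∅)`, always satisfied, makes the number of pairs positive. -/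
theorem exists_fin_pairs : ∃ (f : ℕ) (Fs Es : Fin (f + 1) → Set A.State), ∀ w : ℕ → Set V,
    (∀ j, (∀ t, A.run w t ∈ Fs j) ∨ ∃ t, A.run w t ∈ Es j) ↔ A.Accepts w := by
  classical
  let e : Fin (Fintype.card A.Pair + 1) ≃ Option A.Pair :=
    (Fintype.equivFinOfCardEq (Fintype.card_option)).symm
  refine ⟨_, fun k => (e k).elim Set.univ A.safe, fun k => (e k).elim ∅ A.goal, fun w => ?_⟩
  rw [e.forall_congr_left, Option.forall]
  simp [Accepts]

end PrefixAutomaton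

theorem two_pow_two_pow_mul_le (m n : ℕ) : 2 ^ 2 ^ m * 2 ^ 2 ^ n ≤ 2 ^ 2 ^ (m + n + 1) := by
  rw [← pow_add]
  refine Nat.pow_le_pow_right two_pos ?_
  have hm := Nat.pow_le_pow_right two_pos (m.le_add_right n)
  have hn := Nat.pow_le_pow_right two_pos (n.le_add_left m)
  rw [pow_succ]
  omega

namespace LTL

variable {V : Type}

theorem step_congr (σ : Set V) {a b : LTL V → Prop} (φ : LTL V)
    (h : ∀ χ ∈ sub φ, a χ = b χ) : step σ a φ ↔ step σ b φ := by
  induction φ with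
  | tt | var _ => exact Iff.rfl
  | lnot φ ih => exact not_congr (ih fun χ hχ => h χ (List.mem_cons_of_mem _ hχ))
  | lor φ ψ ih₁ ih₂ =>
    exact or_congr (ih₁ fun χ hχ => h χ (by simp [sub, hχ]))
      (ih₂ fun χ hχ => h χ (by simp [sub, hχ]))
  | lnext φ => exact Iff.of_eq (h φ (by simp [sub, mem_sub_self]))
  | lsu ψ φ ih₁ ih₂ =>
    exact or_congr (ih₁ fun χ hχ => h χ (by simp [sub, hχ]))
      (and_congr (ih₂ fun χ hχ => h χ (by simp [sub, hχ])) (Iff.of_eq (h _ (mem_sub_self _))))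

abbrev Subformula (Φ : LTL V) : Type := {ψ // ψ ∈ sub Φ}

noncomputable instance (Φ : LTL V) : Fintype (Subformula Φ) := by
  classical exact inferInstance

theorem card_subformula_le (Φ : LTL V) : Fintype.card (Subformula Φ) ≤ size Φ := by
  classical
  calc Fintype.card (Subformula Φ) = (sub Φ).toFinset.card :=
        Fintype.card_of_subtype _ fun _ => List.mem_toFinset
    _ ≤ (sub Φ).length := List.toFinset_card_le _
    _ = size Φ := length_sub Φ

section Tableau

variable (Φ : LTL V)

def tableauInit : Set (Subformula Φ → Prop) := {a | a ⟨Φ, mem_sub_self Φ⟩}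

def tableauNext (D : Set (Subformula Φ → Prop)) (σ : Set V) : Set (Subformula Φ → Prop) :=
  (fun a => step σ (Function.extend Subtype.val a fun _ => True) ∘ Subtype.val) ⁻¹' D

variable {Φ}

theorem step_comp_val_congr {a b : LTL V → Prop}
    (h : a ∘ (Subtype.val : Subformula Φ → LTL V) = b ∘ Subtype.val) (σ : Set V) :
    step σ a ∘ (Subtype.val : Subformula Φ → LTL V) = step σ b ∘ Subtype.val :=
  funext fun ψ => propext <| step_congr σ ψ fun χ hχ => congrFun h ⟨χ, sub_subset_sub ψ.2 hχ⟩

theorem comp_val_mem_tableauRun (w : ℕ → Set V) (t : ℕ) (b : LTL V → Prop) :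
    b ∘ Subtype.val ∈ detRun (tableauNext Φ) (tableauInit Φ) w t ↔ TruncSat w t b Φ 0 := by
  induction t generalizing b with
  | zero => exact (truncSat_of_le le_rfl Φ).symm
  | succ t ih =>
    change step (w t) _ ∘ Subtype.val ∈ detRun (tableauNext Φ) (tableauInit Φ) w t ↔ _
    rw [step_comp_val_congr (Function.extend_comp Subtype.val_injective _ _), ih,
      truncSat_succ Φ t.zero_le]

theorem tableauRun_nonempty_iff (w : ℕ → Set V) (t : ℕ) :
    (detRun (tableauNext Φ) (tableauInit Φ) w t).Nonempty ↔ ∃ b, TruncSat w t b Φ 0 := by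
  refine ⟨fun ⟨a, ha⟩ => ⟨Function.extend Subtype.val a fun _ => True, ?_⟩,
    fun ⟨b, hb⟩ => ⟨_, (comp_val_mem_tableauRun w t b).2 hb⟩⟩
  rwa [← comp_val_mem_tableauRun, Function.extend_comp Subtype.val_injective]

theorem tableauRun_eq_univ_iff (w : ℕ → Set V) (t : ℕ) :
    detRun (tableauNext Φ) (tableauInit Φ) w t = Set.univ ↔ ∀ b, TruncSat w t b Φ 0 := by
  refine Set.eq_univ_iff_forall.trans ⟨fun h b => (comp_val_mem_tableauRun w t b).1 (h _),
    fun h a => ?_⟩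
  rw [← Function.extend_comp Subtype.val_injective a fun _ => True, comp_val_mem_tableauRun]
  exact h _

variable (Φ)

open scoped Classical in
theorem card_tableau_le : Fintype.card (Set (Subformula Φ → Prop)) ≤ 2 ^ 2 ^ size Φ := by
  rw [Fintype.card_set, Fintype.card_fun, Fintype.card_prop]
  gcongr
  · norm_num
  · norm_num
  · exact card_subformula_le Φ

open scoped Classical in
noncomputable def safetyAutomaton : PrefixAutomaton V where
  State := Set (Subformula Φ → Prop)
  init := tableauInit Φ
  next := tableauNext Φ
  Pair := Unit
  safe _ := {D | D.Nonempty}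
  goal _ := ∅
  next_notMem_safe _ _ _ h := fun ⟨_, ha⟩ => h ⟨_, ha⟩
  next_mem_goal _ _ _ h := absurd h (Set.notMem_empty _)

open scoped Classical in
noncomputable def coSafetyAutomaton : PrefixAutomaton V where
  State := Set (Subformula Φ → Prop)
  init := tableauInit Φ
  next := tableauNext Φ
  Pair := Unit
  safe _ := ∅
  goal _ := {Set.univ}
  next_notMem_safe _ _ _ _ := Set.notMem_empty _
  next_mem_goal _ _ σ h := by
    rw [Set.mem_singleton_iff] at h ⊢
    rw [h]
    exact Set.preimage_univ

end Tableau

def PrefixRecognizable (Φ : LTL V) : Prop :=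
  ∃ A : PrefixAutomaton V, Fintype.card A.State ≤ 2 ^ 2 ^ size Φ ∧ ∀ w, A.Accepts w ↔ Sat w Φ 0

variable {Φ Ψ : LTL V}

theorem TLG.prefixRecognizable (h : TLG Φ) : PrefixRecognizable Φ := by
  refine ⟨safetyAutomaton Φ, card_tableau_le Φ, fun w => ?_⟩
  have hacc : (safetyAutomaton Φ).Accepts w ↔ ∀ t, ∃ b, TruncSat w t b Φ 0 := by
    change (Unit → (∀ t, (detRun (tableauNext Φ) (tableauInit Φ) w t).Nonempty) ∨
      ∃ t, detRun (tableauNext Φ) (tableauInit Φ) w t ∈ (∅ : Set (Set _))) ↔ _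
    simp only [tableauRun_nonempty_iff, Set.mem_empty_iff_false, exists_false, or_false,
      forall_const]
  rw [hacc]
  refine ⟨fun hall => by_contra fun hn => ?_, fun hΦ t => ⟨_, (truncSat_sat Φ t.zero_le).2 hΦ⟩⟩
  obtain ⟨t, ht⟩ := (eventually_imp_distrib_left.1 (h.prefixRefuted 0) hn).exists
  obtain ⟨b, hb⟩ := hall t
  exact ht b hb

theorem TLF.prefixRecognizable (h : TLF Φ) : PrefixRecognizable Φ := by
  refine ⟨coSafetyAutomaton Φ, card_tableau_le Φ, fun w => ?_⟩
  have hacc : (coSafetyAutomaton Φ).Accepts w ↔ ∃ t, ∀ b, TruncSat w t b Φ 0 := by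
    change (Unit → (∀ t, detRun (tableauNext Φ) (tableauInit Φ) w t ∈ (∅ : Set (Set _))) ∨
      ∃ t, detRun (tableauNext Φ) (tableauInit Φ) w t = Set.univ) ↔ _
    simp only [tableauRun_eq_univ_iff, Set.mem_empty_iff_false, forall_const, false_or]
  rw [hacc]
  exact ⟨fun ⟨t, ht⟩ => (truncSat_sat Φ t.zero_le).1 (ht _),
    fun hΦ => (eventually_imp_distrib_left.1 (h.prefixVerified 0) hΦ).exists⟩

theorem PrefixRecognizable.lnot (h : PrefixRecognizable Φ) : PrefixRecognizable (lnot Φ) := by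
  obtain ⟨A, hcard, hA⟩ := h
  refine ⟨A.compl, hcard.trans ?_, fun w => (A.accepts_compl w).trans (not_congr (hA w))⟩
  gcongr <;> simp [size]

theorem PrefixRecognizable.lor (hΦ : PrefixRecognizable Φ) (hΨ : PrefixRecognizable Ψ) :
    PrefixRecognizable (lor Φ Ψ) := by
  obtain ⟨A, hA, hAw⟩ := hΦ
  obtain ⟨B, hB, hBw⟩ := hΨ
  refine ⟨(A.compl.inter B.compl).compl, ?_, fun w => ?_⟩
  · calc Fintype.card (A.compl.inter B.compl).State
          = Fintype.card A.State * Fintype.card B.State := PrefixAutomaton.card_inter _ _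
      _ ≤ 2 ^ 2 ^ size Φ * 2 ^ 2 ^ size Ψ := Nat.mul_le_mul hA hB
      _ ≤ 2 ^ 2 ^ size (LTL.lor Φ Ψ) := two_pow_two_pow_mul_le _ _
  · simp only [PrefixAutomaton.accepts_compl, PrefixAutomaton.accepts_inter, hAw, hBw, Sat]
    tauto

theorem PrefixRecognizable.land (hΦ : PrefixRecognizable Φ) (hΨ : PrefixRecognizable Ψ) :
    PrefixRecognizable (land Φ Ψ) :=
  (hΦ.lnot.lor hΨ.lnot).lnot

theorem TLPrefix.prefixRecognizable (h : TLPrefix Φ) : PrefixRecognizable Φ := by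
  induction h with
  | g h => exact h.prefixRecognizable
  | f h => exact h.prefixRecognizable
  | not _ ih => exact ih.lnot
  | and _ _ ih₁ ih₂ => exact ih₁.land ih₂
  | or _ _ ih₁ ih₂ => exact ih₁.lor ih₂

end LTL

/-- every `TL_Prefix` formula `Φ` is recognized by a deterministic
ω-automaton with a prefix acceptance condition (pairs `(Fs j, Es j)`, `j = 0,…,f`:
the run always stays in `Fs j` or visits `Es j` at least once, for every `j`)
and at most `2 ^ 2 ^ |Φ|` states. -/
theorem tlPrefix_deterministic_prefix_automaton
    {V : Type} [Fintype V] (Φ : LTL V) (hΦ : LTL.TLPrefix Φ) :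
    ∃ (S : Type) (_ : Fintype S) (s0 : S) (δ : S → Set V → S) (f : ℕ)
      (Fs Es : Fin (f + 1) → Set S),
      Fintype.card S ≤ 2 ^ (2 ^ LTL.size Φ) ∧
      ∀ w : ℕ → Set V,
        ((∀ j, (∀ t, detRun δ s0 w t ∈ Fs j) ∨ (∃ t, detRun δ s0 w t ∈ Es j))
          ↔ LTL.Sat w Φ 0) := by
  obtain ⟨A, hcard, hA⟩ := hΦ.prefixRecognizable
  obtain ⟨f, Fs, Es, hFE⟩ := A.exists_fin_pairs
  exact ⟨A.State, inferInstance, A.init, A.next, f, Fs, Es, hcard, fun w => (hFE w).trans (hA w)⟩
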